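/- arXiv:1701.07153 — 7 statements merged into one kernel-verified Lean document; each statement's English description precedes it below -/
import Mathlib

section
/- For k > 0 with k ≠ 1, the integral ∫_0^∞ log₂(1+x) · k/(k+x)² dx equals log₂(1/k)/(1/k − 1). -/
open MeasureTheory Real

/-- For `k > 0`, `k ≠ 1`, `∫_0^∞ log₂(1+x) · k/(k+x)² dx = log₂(1/k)/(1/k − 1)`. -/
theorem integral_logb_density (k : ℝ) (hk : 0 < k) (hk1 : k ≠ 1) :
    ∫ x in Set.Ioi (0 : ℝ), logb 2 (1 + x) * (k / (k + x) ^ 2) =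
      logb 2 (1 / k) / (1 / k - 1) := by
  have hk0 : k ≠ 0 := ne_of_gt hk
  have hkm1 : k - 1 ≠ 0 := sub_ne_zero.mpr hk1
  have hlog2 : Real.log 2 ≠ 0 := by
    have := Real.log_pos (by norm_num : (1:ℝ) < 2); linarith
  set F : ℝ → ℝ := fun y =>
    (-k * (Real.log (1 + y) / (k + y)) +
      k / (k - 1) * (Real.log (1 + y) - Real.log (k + y))) / Real.log 2 with hF
  have hderiv : ∀ x ∈ Set.Ici (0:ℝ),
      HasDerivAt F (logb 2 (1 + x) * (k / (k + x) ^ 2)) x := by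
    intro x hx
    have hx0 : (0:ℝ) ≤ x := hx
    have h1x : (0:ℝ) < 1 + x := by linarith
    have hkx : (0:ℝ) < k + x := by linarith
    have hl1 : HasDerivAt (fun y : ℝ => Real.log (1 + y)) (1 / (1 + x)) x := by
      have h := ((hasDerivAt_id x).const_add (1:ℝ)).log (ne_of_gt h1x)
      simpa using h
    have hl2 : HasDerivAt (fun y : ℝ => Real.log (k + y)) (1 / (k + x)) x := by
      have h := ((hasDerivAt_id x).const_add k).log (ne_of_gt hkx)
      simpa using h
    have hq : HasDerivAt (fun y : ℝ => Real.log (1 + y) / (k + y))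
        ((1 / (1 + x) * (k + x) - Real.log (1 + x) * 1) / (k + x) ^ 2) x :=
      hl1.div ((hasDerivAt_id x).const_add k) (ne_of_gt hkx)
    have hd : HasDerivAt F
        ((-k * ((1 / (1 + x) * (k + x) - Real.log (1 + x) * 1) / (k + x) ^ 2) +
          k / (k - 1) * (1 / (1 + x) - 1 / (k + x))) / Real.log 2) x :=
      ((hq.const_mul (-k)).add ((hl1.sub hl2).const_mul (k / (k - 1)))).div_const _
    convert hd using 1
    rw [Real.logb]
    field_simp
    ring
  have hpos : ∀ x ∈ Set.Ioi (0:ℝ), 0 ≤ logb 2 (1 + x) * (k / (k + x) ^ 2) := by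
    intro x hx
    have hx0 : (0:ℝ) < x := hx
    have h1 : (0:ℝ) ≤ logb 2 (1 + x) :=
      Real.logb_nonneg (by norm_num) (by linarith)
    have h2 : (0:ℝ) ≤ k / (k + x) ^ 2 := by positivity
    exact mul_nonneg h1 h2
  have hquot : Filter.Tendsto (fun x : ℝ => (1 + x) / (k + x)) Filter.atTop (nhds 1) := by
    have hinv : Filter.Tendsto (fun x : ℝ => (k + x)⁻¹) Filter.atTop (nhds 0) :=
      tendsto_inv_atTop_zero.comp (Filter.tendsto_atTop_add_const_left _ k Filter.tendsto_id)
    have h : Filter.Tendsto (fun x : ℝ => 1 + (1 - k) * (k + x)⁻¹) Filter.atTop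
        (nhds (1 + (1 - k) * 0)) :=
      (hinv.const_mul (1 - k)).const_add 1
    rw [mul_zero, add_zero] at h
    refine h.congr' ?_
    filter_upwards [Filter.eventually_gt_atTop 0] with x hx
    have hkx : k + x ≠ 0 := by positivity
    field_simp
    ring
  have hA : Filter.Tendsto (fun x : ℝ => Real.log (1 + x) / (k + x)) Filter.atTop (nhds 0) := by
    have h1 : Filter.Tendsto (fun x : ℝ => Real.log (1 + x) / (1 + x)) Filter.atTop (nhds 0) := by
      have hbase : Filter.Tendsto (fun x : ℝ => Real.log x / x) Filter.atTop (nhds 0) := by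
        simpa [Function.comp] using
          Real.isLittleO_log_id_atTop.tendsto_div_nhds_zero
      exact hbase.comp (Filter.tendsto_atTop_add_const_left _ 1 Filter.tendsto_id)
    have h := h1.mul hquot
    rw [zero_mul] at h
    refine h.congr' ?_
    filter_upwards [Filter.eventually_gt_atTop 0] with x hx
    have h1x : (1:ℝ) + x ≠ 0 := by positivity
    have hkx : k + x ≠ 0 := by positivity
    field_simp
  have hB : Filter.Tendsto (fun x : ℝ => Real.log (1 + x) - Real.log (k + x))
      Filter.atTop (nhds 0) := by
    have h1 := Real.tendsto_log_comp_add_sub_log 1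
    have h2 := Real.tendsto_log_comp_add_sub_log k
    have h := h1.sub h2
    rw [sub_zero] at h
    refine h.congr fun x => ?_
    rw [add_comm x 1, add_comm x k]
    ring
  have hlim : Filter.Tendsto F Filter.atTop (nhds 0) := by
    have h : Filter.Tendsto F Filter.atTop
        (nhds ((-k * 0 + k / (k - 1) * 0) / Real.log 2)) :=
      ((hA.const_mul (-k)).add (hB.const_mul (k / (k - 1)))).div_const _
    simpa using h
  have key := integral_Ioi_of_hasDerivAt_of_nonneg' hderiv hpos hlim
  rw [key, hF]
  have hlogk1 : Real.log (1 + 0) = 0 := by norm_num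
  simp only [add_zero]
  rw [Real.log_one, Real.logb, one_div, Real.log_inv]
  have h1k : 1 - k ≠ 0 := by intro h; apply hk1; linarith
  have h1 : k⁻¹ - 1 = (1 - k) / k := by field_simp
  rw [h1, div_div_eq_mul_div]
  field_simp
  ring
end

section
/- If X is a nonnegative random variable with density f_X(x) = k/(k+x)² on [0,∞) for some k > 0 with k ≠ 1, then E[log₂(1+X)] = log₂(1/k)/(1/k − 1). -/
/-!
By the change of variables formula, `E[log(1 + X)] = ∫₀^∞ k log(1 + x) / (k + x)² dx`. The
integrand has the elementary primitive
`F(x) = k/(k-1) · (log(1 + x) - log(k + x)) - k log(1 + x) / (k + x)`,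
which tends to `0` at infinity, and `F(0) = -k log k / (k - 1)`; dividing by `log 2`
and rewriting `k log k / (k - 1) = log(1/k) / (1/k - 1)` gives the claim.
-/

open MeasureTheory Real Filter Set

theorem integral_comp_eq_setIntegral_density_smul {Ω α E : Type*} [MeasurableSpace Ω]
    [MeasurableSpace α] [NormedAddCommGroup E] [NormedSpace ℝ E]
    {μ : Measure Ω} {ν : Measure α} {X : Ω → α} {s : Set α} {p : α → ℝ} {g : α → E}
    (hX : AEMeasurable X μ) (hs : MeasurableSet s) (hp : Measurable p) (hp0 : ∀ x ∈ s, 0 ≤ p x)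
    (hmap : μ.map X = ν.withDensity fun x => ENNReal.ofReal (s.indicator p x))
    (hg : AEStronglyMeasurable g (μ.map X)) :
    ∫ ω, g (X ω) ∂μ = ∫ x in s, p x • g x ∂ν := by
  have hofReal : (fun x => ENNReal.ofReal (s.indicator p x)) =
      s.indicator fun x => ENNReal.ofReal (p x) :=
    (indicator_comp_of_zero ENNReal.ofReal_zero).symm
  rw [← integral_map hX hg, hmap, hofReal, withDensity_indicator hs,
    integral_withDensity_eq_integral_toReal_smul hp.ennreal_ofReal
      (.of_forall fun _ => ENNReal.ofReal_lt_top)]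
  exact setIntegral_congr_fun hs fun x hx => by rw [ENNReal.toReal_ofReal (hp0 x hx)]

noncomputable def logPrimitive (k x : ℝ) : ℝ :=
  k / (k - 1) * (log (1 + x) - log (k + x)) - k * (log (1 + x) / (k + x))

lemma hasDerivAt_logPrimitive {k x : ℝ} (hk1 : k ≠ 1) (h1x : 1 + x ≠ 0) (hkx : k + x ≠ 0) :
    HasDerivAt (logPrimitive k) (k / (k + x) ^ 2 * log (1 + x)) x := by
  have hlog1 : HasDerivAt (fun x => log (1 + x)) (1 + x)⁻¹ x := by
    simpa using ((hasDerivAt_id' x).const_add 1).log h1x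
  have hlogk : HasDerivAt (fun x => log (k + x)) (k + x)⁻¹ x := by
    simpa using ((hasDerivAt_id' x).const_add k).log hkx
  refine (((hlog1.sub hlogk).const_mul (k / (k - 1))).sub
    ((hlog1.div ((hasDerivAt_id' x).const_add k) hkx).const_mul k)).congr_deriv ?_
  have : k - 1 ≠ 0 := sub_ne_zero.mpr hk1
  field_simp
  ring

lemma tendsto_logPrimitive_atTop (k : ℝ) : Tendsto (logPrimitive k) atTop (nhds 0) := by
  have hdiff : Tendsto (fun x => log (1 + x) - log (k + x)) atTop (nhds 0) := by
    convert (tendsto_log_comp_add_sub_log 1).sub (tendsto_log_comp_add_sub_log k) using 1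
    · ext x; rw [add_comm 1, add_comm k]; ring
    · simp
  have hquot : Tendsto (fun x => log (1 + x) / (k + x)) atTop (nhds 0) := by
    convert (tendsto_pow_log_div_mul_add_atTop 1 (k - 1) 1 one_ne_zero).comp
      (tendsto_atTop_add_const_left _ 1 tendsto_id) using 2 with x
    simp only [Function.comp_apply, id, pow_one]
    ring_nf
  have := (hdiff.const_mul (k / (k - 1))).sub (hquot.const_mul k)
  rwa [mul_zero, mul_zero, sub_zero] at this

theorem integral_Ioi_div_add_sq_mul_log_one_add {k : ℝ} (hk : 0 < k) (hk1 : k ≠ 1) :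
    ∫ x in Ioi 0, k / (k + x) ^ 2 * log (1 + x) = k * log k / (k - 1) := by
  rw [integral_Ioi_of_hasDerivAt_of_nonneg' (fun x (hx : 0 ≤ x) => hasDerivAt_logPrimitive hk1
      (by positivity) (by positivity))
    (fun x (hx : 0 < x) => mul_nonneg (by positivity) (log_nonneg (by linarith)))
    (tendsto_logPrimitive_atTop k)]
  have : k - 1 ≠ 0 := sub_ne_zero.mpr hk1
  simp only [logPrimitive, add_zero, log_one]
  field_simp
  ring

theorem expectation_logb_ratio_general
    {Ω : Type*} [MeasurableSpace Ω] (μ : Measure Ω)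
    (X : Ω → ℝ) (hmeas : Measurable X)
    (k : ℝ) (hk : 0 < k) (hk1 : k ≠ 1)
    (hpdf : μ.map X =
      volume.withDensity
        (fun x => ENNReal.ofReal (Set.indicator (Set.Ici (0 : ℝ))
          (fun x => k / (k + x) ^ 2) x))) :
    ∫ ω, logb 2 (1 + X ω) ∂μ = logb 2 (1 / k) / (1 / k - 1) := by
  simp only [logb, integral_div]
  rw [integral_comp_eq_setIntegral_density_smul (g := fun x => log (1 + x)) hmeas.aemeasurable
      measurableSet_Ici (by fun_prop) (fun x _ => by positivity) hpdf
      (measurable_const.add measurable_id).log.aestronglyMeasurable]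
  simp only [smul_eq_mul]
  rw [integral_Ici_eq_integral_Ioi, integral_Ioi_div_add_sq_mul_log_one_add hk hk1, one_div,
    log_inv]
  have : k - 1 ≠ 0 := sub_ne_zero.mpr hk1
  have : 1 - k ≠ 0 := sub_ne_zero.mpr hk1.symm
  field_simp
  ring

/-- If `X` is a nonnegative random variable with density `k/(k+x)²` on `[0,∞)` for some
`k > 0`, `k ≠ 1`, then `E[log₂(1+X)] = log₂(1/k)/(1/k − 1)`. -/
theorem expectation_logb_ratio
    {Ω : Type*} [MeasurableSpace Ω] (μ : Measure Ω) [IsProbabilityMeasure μ]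
    (X : Ω → ℝ) (hmeas : Measurable X)
    (k : ℝ) (hk : 0 < k) (hk1 : k ≠ 1)
    (hpdf : μ.map X =
      volume.withDensity
        (fun x => ENNReal.ofReal (Set.indicator (Set.Ici (0 : ℝ))
          (fun x => k / (k + x) ^ 2) x))) :
    ∫ ω, logb 2 (1 + X ω) ∂μ = logb 2 (1 / k) / (1 / k - 1) :=
  expectation_logb_ratio_general μ X hmeas k hk hk1 hpdf
end

section
/- The function E(α) = (α(1−α)/(1−2α))·log₂(α⁻¹ − 1), extended continuously at α = 1/2 by the value (1/2)·log₂ e, is concave on the open interval (0,1). -/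
open Real MeasureTheory Set

/-!
Substituting `u = α + (1 - 2α) t` gives
`E(α) = (log 2)⁻¹ ∫₀¹ α(1-α) / ((1-t)α + t(1-α)) dt`, valid also at `α = 1/2`.
The integrand is `1 / ((1-t)/(1-α) + t/α)`, the weighted harmonic mean of `1-α` and `α`,
hence concave in `α` for each `t`; an integral of concave functions is concave.
-/

theorem ConcaveOn.integral {ι E : Type*} [MeasurableSpace ι] [AddCommGroup E] [Module ℝ E]
    {μ : Measure ι} {s : Set E} {f : ι → E → ℝ} (hs : Convex ℝ s)
    (hf : ∀ᵐ t ∂μ, ConcaveOn ℝ s (f t)) (hint : ∀ x ∈ s, Integrable (fun t => f t x) μ) :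
    ConcaveOn ℝ s fun x => ∫ t, f t x ∂μ := by
  refine ⟨hs, fun x hx y hy a b ha hb hab => ?_⟩
  simp only [smul_eq_mul, ← integral_const_mul]
  rw [← integral_add ((hint x hx).const_mul a) ((hint y hy).const_mul b)]
  refine integral_mono_ae (((hint x hx).const_mul a).add ((hint y hy).const_mul b))
    (hint _ (hs hx hy ha hb hab)) ?_
  filter_upwards [hf] with t ht
  exact ht.2 hx hy ha hb hab

noncomputable def throughputKernel (t α : ℝ) : ℝ := α * (1 - α) / ((1 - t) * α + t * (1 - α))

lemma throughputKernel_denom_pos {t α : ℝ} (ht : t ∈ Icc (0 : ℝ) 1) (hα : α ∈ Ioo (0 : ℝ) 1) :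
    0 < (1 - t) * α + t * (1 - α) :=
  convex_Ioi (0 : ℝ) hα.1 (sub_pos.2 hα.2) (sub_nonneg.2 ht.2) ht.1 (by ring)

lemma concaveOn_throughputKernel {t : ℝ} (ht : t ∈ Icc (0 : ℝ) 1) :
    ConcaveOn ℝ (Ioo 0 1) (throughputKernel t) := by
  refine ⟨convex_Ioo 0 1, fun x hx y hy a b ha hb hab => ?_⟩
  have hz : a • x + b • y ∈ Ioo (0 : ℝ) 1 := convex_Ioo 0 1 hx hy ha hb hab
  simp only [smul_eq_mul] at hz ⊢
  have hDx := throughputKernel_denom_pos ht hx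
  have hDy := throughputKernel_denom_pos ht hy
  have hDz := throughputKernel_denom_pos ht hz
  obtain rfl : b = 1 - a := by linarith
  have defect : throughputKernel t (a * x + (1 - a) * y)
        - (a * throughputKernel t x + (1 - a) * throughputKernel t y)
      = a * (1 - a) * (x - y) ^ 2 * (t * (1 - t)) /
        (((1 - t) * x + t * (1 - x)) * ((1 - t) * y + t * (1 - y)) *
          ((1 - t) * (a * x + (1 - a) * y) + t * (1 - (a * x + (1 - a) * y)))) := by
    unfold throughputKernel
    rw [mul_div_assoc', mul_div_assoc', div_add_div _ _ hDx.ne' hDy.ne',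
      div_sub_div _ _ hDz.ne' (by positivity), div_eq_div_iff (by positivity) (by positivity)]
    ring
  have hnum : 0 ≤ a * (1 - a) * (x - y) ^ 2 * (t * (1 - t)) :=
    mul_nonneg (mul_nonneg (mul_nonneg ha hb) (sq_nonneg _)) (mul_nonneg ht.1 (sub_nonneg.2 ht.2))
  exact sub_nonneg.1 (defect ▸ div_nonneg hnum (by positivity))

lemma continuousOn_throughputKernel {α : ℝ} (hα : α ∈ Ioo (0 : ℝ) 1) :
    ContinuousOn (fun t => throughputKernel t α) (Icc 0 1) :=
  continuousOn_const.div (by fun_prop) fun _ ht => (throughputKernel_denom_pos ht hα).ne'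

lemma integral_throughputKernel_half : ∫ t in (0 : ℝ)..1, throughputKernel t (1 / 2) = 1 / 2 := by
  have : (fun t => throughputKernel t (1 / 2)) = fun _ => 1 / 2 := by
    funext t; unfold throughputKernel; ring
  rw [this, intervalIntegral.integral_const]
  norm_num

lemma integral_throughputKernel {α : ℝ} (hα : α ∈ Ioo (0 : ℝ) 1) (hα' : α ≠ 1 / 2) :
    ∫ t in (0 : ℝ)..1, throughputKernel t α
      = α * (1 - α) / (1 - 2 * α) * log (α⁻¹ - 1) := by
  obtain ⟨h0, h1⟩ := hα
  have hc : 1 - 2 * α ≠ 0 := fun h => hα' (by linarith)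
  have hsubst : (fun t => throughputKernel t α) = fun t => α * (1 - α) * ((1 - 2 * α) * t + α)⁻¹ := by
    funext t; unfold throughputKernel; rw [div_eq_mul_inv]; ring_nf
  rw [hsubst, intervalIntegral.integral_const_mul,
    intervalIntegral.integral_comp_mul_add (fun u => u⁻¹) hc, mul_zero, zero_add, mul_one,
    show 1 - 2 * α + α = 1 - α by ring, integral_inv (notMem_uIcc_of_lt h0 (by linarith)),
    show (1 - α) / α = α⁻¹ - 1 by field_simp, smul_eq_mul]
  ring

/-- The function `E(α) = (α(1−α)/(1−2α))·log₂(α⁻¹ − 1)`, extended continuously at `α = 1/2`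
by the value `(1/2)·log₂ e`, is concave on `(0,1)`. -/
theorem expected_throughput_concave :
    ConcaveOn ℝ (Set.Ioo (0 : ℝ) 1)
      (fun α => if α = 1 / 2 then (1 / 2) * logb 2 (exp 1)
        else (α * (1 - α) / (1 - 2 * α)) * logb 2 (α⁻¹ - 1)) := by
  have hconcave : ConcaveOn ℝ (Ioo 0 1) fun α => ∫ t in Ioc 0 1, throughputKernel t α :=
    ConcaveOn.integral (convex_Ioo 0 1)
      (ae_restrict_of_forall_mem measurableSet_Ioc fun t ht =>
        concaveOn_throughputKernel (Ioc_subset_Icc_self ht))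
      fun α hα => ((continuousOn_throughputKernel hα).integrableOn_Icc).mono_set Ioc_subset_Icc_self
  refine (hconcave.smul (inv_nonneg.2 (log_nonneg one_le_two))).congr fun α hα => ?_
  simp only [smul_eq_mul, ← intervalIntegral.integral_of_le zero_le_one]
  split_ifs with h
  · rw [h, integral_throughputKernel_half, logb, log_exp]
    ring
  · rw [integral_throughputKernel hα h, logb]
    ring
end

section
/- The second derivative of E(α) = (α(1−α)/(1−2α))·log₂(α⁻¹−1) at any α ∈ (0,1) with α ≠ 1/2 equals −((t+1)³/(t(1−t)³ ln 2))·(1 + 2t ln t − t²) where t = α/(1−α), and in particular is nonpositive. -/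
/-!
Two explicit differentiations give
`E'' α = (2 log((1-α)/α) / (1-2α)³ - 1 / (α(1-α)(1-2α)²)) / ln 2`, which the substitution
`t = α/(1-α)` turns into the stated closed form. Its sign is that of `-(1-t) g(t)` with
`g(t) = 1 + 2t ln t - t²`; since `g'(t) = 2(ln t + 1 - t) ≤ 0` and `g(1) = 0`, the function `g`
has the sign of `1 - t`, so `E'' ≤ 0`.
-/

open Real Set Filter Topology

lemma antitoneOn_one_add_two_mul_mul_log_sub_sq :
    AntitoneOn (fun t : ℝ => 1 + 2 * t * log t - t ^ 2) (Ioi 0) := by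
  refine antitoneOn_of_hasDerivWithinAt_nonpos (convex_Ioi 0)
    (f' := fun t => 2 * (log t + 1 - t)) ?_ (fun t ht => ?_) (fun t ht => ?_)
  · exact (continuousOn_const.add ((continuousOn_const.mul continuousOn_id).mul
      (continuousOn_log.mono fun t ht => ne_of_gt ht))).sub (continuousOn_pow 2)
  · rw [interior_Ioi, mem_Ioi] at ht
    refine (((((hasDerivAt_id' t).const_mul 2).mul (hasDerivAt_log ht.ne')).const_add 1).sub
      (hasDerivAt_pow 2 t)).congr_deriv ?_ |>.hasDerivWithinAt
    field_simp
    ring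
  · rw [interior_Ioi, mem_Ioi] at ht
    linarith [log_le_sub_one_of_pos ht]

lemma one_sub_mul_one_add_two_mul_mul_log_sub_sq_nonneg {t : ℝ} (ht : 0 < t) :
    0 ≤ (1 - t) * (1 + 2 * t * log t - t ^ 2) := by
  have hg := antitoneOn_one_add_two_mul_mul_log_sub_sq
  have h1 : (1 : ℝ) ∈ Ioi 0 := mem_Ioi.mpr one_pos
  rcases le_total t 1 with h | h
  · have := hg ht h1 h
    simp only [log_one, mul_zero, one_pow] at this
    exact mul_nonneg (by linarith) (by linarith)
  · have := hg h1 ht h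
    simp only [log_one, mul_zero, one_pow] at this
    exact mul_nonneg_of_nonpos_of_nonpos (by linarith) (by linarith)

lemma neg_div_mul_one_add_two_mul_mul_log_sub_sq_nonpos {t : ℝ} (ht : 0 < t) :
    -((t + 1) ^ 3 / (t * (1 - t) ^ 3 * log 2)) * (1 + 2 * t * log t - t ^ 2) ≤ 0 := by
  rw [neg_mul, neg_nonpos]
  rcases eq_or_ne t 1 with rfl | ht1
  · simp
  have hrw : (t + 1) ^ 3 / (t * (1 - t) ^ 3 * log 2) * (1 + 2 * t * log t - t ^ 2) =
      (t + 1) ^ 3 / (t * (1 - t) ^ 4 * log 2) * ((1 - t) * (1 + 2 * t * log t - t ^ 2)) := by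
    field_simp
  rw [hrw]
  exact mul_nonneg (by positivity) (one_sub_mul_one_add_two_mul_mul_log_sub_sq_nonneg ht)

section Derivatives

noncomputable def expectedThroughput (x : ℝ) : ℝ :=
  x * (1 - x) / (1 - 2 * x) * logb 2 (x⁻¹ - 1)

noncomputable def expectedThroughputDeriv (x : ℝ) : ℝ :=
  ((1 - 2 * x + 2 * x ^ 2) / (1 - 2 * x) ^ 2 * log (x⁻¹ - 1) - 1 / (1 - 2 * x)) / log 2

noncomputable def expectedThroughputDeriv2 (x : ℝ) : ℝ :=
  (2 * log (x⁻¹ - 1) / (1 - 2 * x) ^ 3 - 1 / (x * (1 - x) * (1 - 2 * x) ^ 2)) / log 2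

variable {x : ℝ}

lemma hasDerivAt_inv_sub_one_log (hx0 : x ≠ 0) (hx1 : x ≠ 1) :
    HasDerivAt (fun y => log (y⁻¹ - 1)) (-1 / (x * (1 - x))) x := by
  have harg : x⁻¹ - 1 ≠ 0 := sub_ne_zero.mpr (inv_ne_one.mpr hx1)
  refine (((hasDerivAt_inv hx0).sub_const 1).log harg).congr_deriv ?_
  field_simp

lemma hasDerivAt_expectedThroughput (hx0 : x ≠ 0) (hx1 : x ≠ 1) (hx2 : 1 - 2 * x ≠ 0) :
    HasDerivAt expectedThroughput (expectedThroughputDeriv x) x := by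
  have hfrac : HasDerivAt (fun y : ℝ => y * (1 - y) / (1 - 2 * y)) _ x :=
    ((hasDerivAt_id' x).fun_mul ((hasDerivAt_id' x).const_sub 1)).div
      ((hasDerivAt_id' x).const_mul 2 |>.const_sub 1) hx2
  refine (hfrac.mul ((hasDerivAt_inv_sub_one_log hx0 hx1).div_const (log 2))).congr_deriv ?_
  unfold expectedThroughputDeriv
  field_simp
  ring

lemma hasDerivAt_expectedThroughputDeriv (hx0 : x ≠ 0) (hx1 : x ≠ 1) (hx2 : 1 - 2 * x ≠ 0) :
    HasDerivAt expectedThroughputDeriv (expectedThroughputDeriv2 x) x := by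
  have hlin : HasDerivAt (fun y : ℝ => 1 - 2 * y) (-2) x := by
    simpa using ((hasDerivAt_id' x).const_mul 2).const_sub 1
  have hcoef : HasDerivAt (fun y : ℝ => (1 - 2 * y + 2 * y ^ 2) / (1 - 2 * y) ^ 2) _ x :=
    (hlin.fun_add ((hasDerivAt_pow 2 x).const_mul 2)).div (hlin.pow 2) (pow_ne_zero 2 hx2)
  refine (((hcoef.mul (hasDerivAt_inv_sub_one_log hx0 hx1)).sub
    ((hasDerivAt_const x 1).div hlin hx2)).div_const (log 2)).congr_deriv ?_
  unfold expectedThroughputDeriv2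
  field_simp
  ring

lemma deriv_deriv_expectedThroughput (hx0 : x ≠ 0) (hx1 : x ≠ 1) (hx2 : 1 - 2 * x ≠ 0) :
    deriv (deriv expectedThroughput) x = expectedThroughputDeriv2 x := by
  have hderiv : deriv expectedThroughput =ᶠ[𝓝 x] expectedThroughputDeriv := by
    filter_upwards [eventually_ne_nhds hx0, eventually_ne_nhds hx1,
      (by fun_prop : ContinuousAt (fun y : ℝ => 1 - 2 * y) x).eventually_ne hx2] with y hy0 hy1 hy2
    exact (hasDerivAt_expectedThroughput hy0 hy1 hy2).deriv
  rw [hderiv.deriv_eq]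
  exact (hasDerivAt_expectedThroughputDeriv hx0 hx1 hx2).deriv

lemma expectedThroughputDeriv2_eq (hx0 : x ≠ 0) (hx1 : x ≠ 1) :
    expectedThroughputDeriv2 x =
      -((x / (1 - x) + 1) ^ 3 / ((x / (1 - x)) * (1 - x / (1 - x)) ^ 3 * log 2)) *
        (1 + 2 * (x / (1 - x)) * log (x / (1 - x)) - (x / (1 - x)) ^ 2) := by
  have hlog : log (x / (1 - x)) = -log (x⁻¹ - 1) := by
    rw [← log_inv]
    congr 1
    field_simp
  have hsucc : x / (1 - x) + 1 = 1 / (1 - x) := by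
    field_simp
    ring
  have hone_sub : 1 - x / (1 - x) = (1 - 2 * x) / (1 - x) := by
    field_simp
    ring
  rw [hlog, hsucc, hone_sub]
  unfold expectedThroughputDeriv2
  field_simp
  ring

end Derivatives

/-- The second derivative of `E(α) = (α(1−α)/(1−2α))·log₂(α⁻¹−1)` at `α ∈ (0,1)`, `α ≠ 1/2`,
equals `−((t+1)³/(t(1−t)³ ln 2))·(1 + 2t ln t − t²)` where `t = α/(1−α)`, and is nonpositive. -/
theorem second_deriv_expected_throughput {α : ℝ} (hα : α ∈ Set.Ioo (0 : ℝ) 1)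
    (hα2 : α ≠ 1 / 2) :
    deriv (deriv (fun α : ℝ => (α * (1 - α) / (1 - 2 * α)) * logb 2 (α⁻¹ - 1))) α =
      -((α / (1 - α) + 1) ^ 3 / ((α / (1 - α)) * (1 - α / (1 - α)) ^ 3 * log 2)) *
        (1 + 2 * (α / (1 - α)) * log (α / (1 - α)) - (α / (1 - α)) ^ 2) ∧
    deriv (deriv (fun α : ℝ => (α * (1 - α) / (1 - 2 * α)) * logb 2 (α⁻¹ - 1))) α ≤ 0 := by
  obtain ⟨hα0, hα1⟩ := hα
  have hα2' : 1 - 2 * α ≠ 0 := by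
    contrapose! hα2
    linarith
  have hE := (deriv_deriv_expectedThroughput hα0.ne' hα1.ne hα2').trans
    (expectedThroughputDeriv2_eq hα0.ne' hα1.ne)
  exact ⟨hE, hE ▸ neg_div_mul_one_add_two_mul_mul_log_sub_sq_nonpos (div_pos hα0 (sub_pos.mpr hα1))⟩
end

section
/- For the function E(α) = (α(1−α)/(1−2α))·log₂(α⁻¹−1) on (0,1) (extended continuously at α = 1/2), we have E(α) ≤ (1/2)·log₂(e) for all α ∈ (0,1), with equality iff α = 1/2. -/
open Real

/-- Key inequality: `t * log t / (t² - 1) < 1/2` for positive `t ≠ 1`. -/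
lemma key_t {t : ℝ} (ht : 0 < t) (ht1 : t ≠ 1) : t * log t / (t ^ 2 - 1) < 1 / 2 := by
  have hsinh : sinh (log t) = (t - t⁻¹) / 2 := Real.sinh_log ht
  have htinv : t * t⁻¹ = 1 := mul_inv_cancel₀ ht.ne'
  rcases lt_or_gt_of_ne ht1 with h | h
  · -- t < 1 : t² - 1 < 0
    have hlt : sinh (log t) < log t := by
      rw [Real.sinh_lt_self_iff]
      exact Real.log_neg ht h
    rw [hsinh] at hlt
    have hden : t ^ 2 - 1 < 0 := by nlinarith
    rw [div_lt_iff_of_neg hden]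
    nlinarith [mul_lt_mul_of_pos_left hlt ht]
  · -- t > 1
    have hlt : log t < sinh (log t) := by
      rw [Real.self_lt_sinh_iff]
      exact Real.log_pos h
    rw [hsinh] at hlt
    have hden : 0 < t ^ 2 - 1 := by nlinarith
    rw [div_lt_iff₀ hden]
    nlinarith [mul_lt_mul_of_pos_left hlt ht]

lemma key_alpha {α : ℝ} (h0 : 0 < α) (h1 : α < 1) (hne : α ≠ 1 / 2) :
    α * (1 - α) / (1 - 2 * α) * log (α⁻¹ - 1) < 1 / 2 := by
  have hα : α ≠ 0 := h0.ne'
  have ht : 0 < α⁻¹ - 1 := by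
    have : 1 < α⁻¹ := (one_lt_inv_iff₀).mpr ⟨h0, h1⟩
    linarith
  have ht1 : α⁻¹ - 1 ≠ 1 := by
    intro hcon
    apply hne
    have h2 : α⁻¹ = 2 := by linarith
    have : α * α⁻¹ = 1 := mul_inv_cancel₀ hα
    rw [h2] at this
    linarith
  have h2α : (1 : ℝ) - 2 * α ≠ 0 := by
    intro hcon; apply hne; linarith
  have hsq : (α⁻¹ - 1) ^ 2 - 1 ≠ 0 := by
    intro hcon
    have h' : ((α⁻¹ - 1) - 1) * ((α⁻¹ - 1) + 1) = 0 := by linear_combination hcon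
    rcases mul_eq_zero.mp h' with h' | h'
    · exact ht1 (by linarith)
    · linarith
  have hcoef : α * (1 - α) / (1 - 2 * α) = (α⁻¹ - 1) / ((α⁻¹ - 1) ^ 2 - 1) := by
    rw [div_eq_div_iff h2α hsq]
    field_simp
    ring
  rw [hcoef, div_mul_eq_mul_div]
  exact key_t ht ht1

/-- For `E(α) = (α(1−α)/(1−2α))·log₂(α⁻¹−1)` on `(0,1)` (extended continuously at `1/2`),
`E(α) ≤ (1/2)·log₂ e` for all `α ∈ (0,1)`, with equality iff `α = 1/2`. -/
theorem expected_throughput_le_half_logb_e {α : ℝ} (hα : α ∈ Set.Ioo (0 : ℝ) 1) :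
    (if α = 1 / 2 then (1 / 2) * logb 2 (exp 1)
      else (α * (1 - α) / (1 - 2 * α)) * logb 2 (α⁻¹ - 1)) ≤ (1 / 2) * logb 2 (exp 1) ∧
    ((if α = 1 / 2 then (1 / 2) * logb 2 (exp 1)
      else (α * (1 - α) / (1 - 2 * α)) * logb 2 (α⁻¹ - 1)) = (1 / 2) * logb 2 (exp 1) ↔
      α = 1 / 2) := by
  obtain ⟨h0, h1⟩ := hα
  by_cases hne : α = 1 / 2
  · simp [hne]
  · have key := key_alpha h0 h1 hne
    have hlog2 : (0 : ℝ) < log 2 := Real.log_pos (by norm_num)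
    have hstrict : α * (1 - α) / (1 - 2 * α) * logb 2 (α⁻¹ - 1) < 1 / 2 * logb 2 (exp 1) := by
      simp only [Real.logb, Real.log_exp]
      rw [mul_div_assoc', mul_one_div]
      exact (div_lt_div_iff_of_pos_right hlog2).mpr key
    rw [if_neg hne]
    exact ⟨hstrict.le, iff_of_false hstrict.ne hne⟩
end

section
/- Let E(α) be the continuous extension of (α(1−α)/(1−2α))·log₂(α⁻¹−1) on (0,1). For γ₀ > 0 and θ ∈ (0,1), the maximizer of E(α) over the feasible set {α ∈ (0,1) : α ≥ γ₀(1−θ)/(θ+γ₀(1−θ))} is α* = max(1/2, (θ/((1−θ)γ₀) + 1)⁻¹). -/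
/-!
Substituting `v = log (α⁻¹ - 1)`, i.e. `α = 1 / (1 + eᵛ)`, turns `α(1−α)/(1−2α)` into `1 / (2 sinh v)`,
so `E(α) = (v / sinh v) / (2 log 2)`. The even function `v / sinh v` is at most `1 = 2 log 2 · E(1/2)`,
and it decreases in `|v|` because `sinh v / v` is a slope of the convex function `sinh` on `[0, ∞)`.
As `α` increases past `1/2`, `|v|` increases, so `E` is maximal at `1/2` when that point is feasible
and at the left endpoint of the feasible set otherwise.
-/

open Real Set

lemma convexOn_sinh_Ici : ConvexOn ℝ (Ici 0) sinh :=
  MonotoneOn.convexOn_of_deriv (convex_Ici 0) continuous_sinh.continuousOn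
    differentiable_sinh.differentiableOn <| by
      rw [Real.deriv_sinh, interior_Ici]
      intro x hx y hy hxy
      exact cosh_le_cosh.2 (by rwa [abs_of_pos hx, abs_of_pos hy])

lemma monotoneOn_sinh_div_self : MonotoneOn (fun x => sinh x / x) (Ioi 0) := by
  have h := convexOn_sinh_Ici.slope_mono (self_mem_Ici (a := (0 : ℝ)))
  simp only [slope_fun_def_field, sinh_zero, sub_zero] at h
  exact h.mono fun x hx => ⟨mem_Ici.2 (le_of_lt hx), ne_of_gt hx⟩

lemma antitoneOn_self_div_sinh : AntitoneOn (fun x => x / sinh x) (Ioi 0) := by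
  intro x hx y hy hxy
  have hpos : 0 < sinh x / x := div_pos (sinh_pos_iff.2 hx) hx
  simpa only [inv_div] using inv_anti₀ hpos (monotoneOn_sinh_div_self hx hy hxy)

lemma neg_div_sinh_neg (x : ℝ) : -x / sinh (-x) = x / sinh x := by
  rw [sinh_neg, neg_div_neg_eq]

lemma monotoneOn_self_div_sinh_Iio : MonotoneOn (fun x => x / sinh x) (Iio 0) := by
  intro x hx y hy hxy
  simpa only [neg_div_sinh_neg] using
    antitoneOn_self_div_sinh (mem_Ioi.2 (neg_pos.2 hy)) (mem_Ioi.2 (neg_pos.2 hx))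
      (neg_le_neg hxy)

lemma self_div_sinh_le_one (x : ℝ) : x / sinh x ≤ 1 := by
  rcases le_total 0 x with hx | hx
  · exact div_le_one_of_le₀ (self_le_sinh_iff.2 hx) (sinh_nonneg_iff.2 hx)
  · rw [← neg_div_sinh_neg]
    exact div_le_one_of_le₀ (self_le_sinh_iff.2 (neg_nonneg.2 hx))
      (sinh_nonneg_iff.2 (neg_nonneg.2 hx))

lemma sinh_log_inv_sub_one {α : ℝ} (h0 : 0 < α) (h1 : α < 1) :
    sinh (log (α⁻¹ - 1)) = (1 - 2 * α) / (2 * (α * (1 - α))) := by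
  have hpos : 0 < α⁻¹ - 1 := sub_pos.2 (one_lt_inv₀ h0 |>.2 h1)
  rw [sinh_eq, exp_neg, exp_log hpos]
  have : 1 - α ≠ 0 := by linarith
  field_simp
  ring

noncomputable def throughput (α : ℝ) : ℝ :=
  if α = 1 / 2 then (1 / 2) * logb 2 (exp 1)
  else (α * (1 - α) / (1 - 2 * α)) * logb 2 (α⁻¹ - 1)

lemma throughput_half : throughput (1 / 2) = 1 / (2 * log 2) := by
  rw [throughput, if_pos rfl, logb, log_exp]
  ring

lemma throughput_eq {α : ℝ} (h0 : 0 < α) (h1 : α < 1) (hne : α ≠ 1 / 2) :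
    throughput α = log (α⁻¹ - 1) / sinh (log (α⁻¹ - 1)) / (2 * log 2) := by
  have hfactor : α * (1 - α) / (1 - 2 * α) = (2 * sinh (log (α⁻¹ - 1)))⁻¹ := by
    rw [sinh_log_inv_sub_one h0 h1, mul_div_assoc', mul_div_mul_left _ _ two_ne_zero, inv_div]
  rw [throughput, if_neg hne, hfactor, logb]
  ring

lemma throughput_le_half {α : ℝ} (h0 : 0 < α) (h1 : α < 1) :
    throughput α ≤ throughput (1 / 2) := by
  rcases eq_or_ne α (1 / 2) with rfl | hne
  · exact le_rfl
  rw [throughput_eq h0 h1 hne, throughput_half]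
  exact div_le_div_of_nonneg_right (self_div_sinh_le_one _) (by positivity)

lemma antitoneOn_throughput : AntitoneOn throughput (Ioo (1 / 2) 1) := by
  intro a ⟨ha0, ha1⟩ b ⟨hb0, hb1⟩ hab
  have hlog_neg {α : ℝ} (h0 : 1 / 2 < α) (h1 : α < 1) : log (α⁻¹ - 1) < 0 := by
    have : α⁻¹ < 2 := by rw [inv_lt_comm₀ (by linarith) two_pos]; linarith
    exact log_neg (sub_pos.2 (one_lt_inv₀ (by linarith) |>.2 h1)) (by linarith)
  have hlog_anti : log (b⁻¹ - 1) ≤ log (a⁻¹ - 1) :=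
    log_le_log (sub_pos.2 (one_lt_inv₀ (by linarith) |>.2 hb1))
      (sub_le_sub_right (inv_anti₀ (by linarith) hab) 1)
  rw [throughput_eq (by linarith) ha1 (by linarith), throughput_eq (by linarith) hb1 (by linarith)]
  exact div_le_div_of_nonneg_right
    (monotoneOn_self_div_sinh_Iio (hlog_neg hb0 hb1) (hlog_neg ha0 ha1) hlog_anti) (by positivity)

/-- The maximizer of the (continuously extended) expected throughput
`E(α) = (α(1−α)/(1−2α))·log₂(α⁻¹−1)` over the feasible set
`{α ∈ (0,1) : α ≥ γ₀(1−θ)/(θ+γ₀(1−θ))}` is `α* = max(1/2, (θ/((1−θ)γ₀)+1)⁻¹)`. -/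
theorem optimal_harvest_ratio_direct (γ₀ θ : ℝ) (hγ : 0 < γ₀) (hθ : θ ∈ Set.Ioo (0 : ℝ) 1) :
    letI E : ℝ → ℝ := fun α => if α = 1 / 2 then (1 / 2) * logb 2 (exp 1)
      else (α * (1 - α) / (1 - 2 * α)) * logb 2 (α⁻¹ - 1)
    letI S : Set ℝ := {α | α ∈ Set.Ioo (0 : ℝ) 1 ∧ γ₀ * (1 - θ) / (θ + γ₀ * (1 - θ)) ≤ α}
    letI αstar : ℝ := max (1 / 2) (θ / ((1 - θ) * γ₀) + 1)⁻¹
    αstar ∈ S ∧ ∀ α ∈ S, E α ≤ E αstar := by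
  obtain ⟨hθ0, hθ1⟩ := hθ
  set c := γ₀ * (1 - θ) / (θ + γ₀ * (1 - θ))
  have hden : 0 < θ + γ₀ * (1 - θ) := by nlinarith
  have hc1 : c < 1 := by rw [div_lt_one hden]; linarith
  have hc : (θ / ((1 - θ) * γ₀) + 1)⁻¹ = c := by
    rw [div_add_one (mul_pos (sub_pos.2 hθ1) hγ).ne', inv_div]
    ring
  simp only [hc, mem_ofPred_eq, mem_Ioo]
  refine ⟨⟨⟨by positivity, max_lt (by norm_num) hc1⟩, le_max_right _ _⟩, ?_⟩
  rintro α ⟨⟨hα0, hα1⟩, hcα⟩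
  change throughput α ≤ throughput (max (1 / 2) c)
  rcases le_or_gt c (1 / 2) with hc_le | hc_gt
  · rw [max_eq_left hc_le]
    exact throughput_le_half hα0 hα1
  · rw [max_eq_right hc_gt.le]
    exact antitoneOn_throughput ⟨hc_gt, hc1⟩ ⟨hc_gt.trans_le hcα, hα1⟩ hcα
end

section
/- The function f(τ) = (τ/(τ−1))·log₂(τ), extended by f(1) = log₂(e), is strictly monotonically increasing on (0, ∞). -/
open Real

/-! Up to the factor `1 / log 2`, the function is `τ ↦ dslope (x ↦ x log x) 1 τ`: the slope of the
secant of `x ↦ x log x` through `1` and `τ`, filled in at `τ = 1` by the derivative `log 1 + 1 = 1`.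
Since `x ↦ x log x` is strictly convex, its secant slopes from a fixed point increase strictly, and
the derivative at that point lies strictly between the slopes to its left and to its right. -/

theorem StrictConvexOn.strictMonoOn_dslope {S : Set ℝ} {f : ℝ → ℝ} {a : ℝ}
    (hf : StrictConvexOn ℝ S f) (ha : a ∈ S) (hfa : DifferentiableAt ℝ f a) :
    StrictMonoOn (dslope f a) S := by
  intro x hx y hy hxy
  rcases eq_or_ne x a with rfl | hxa
  · rw [dslope_same, dslope_of_ne f hxy.ne']
    exact hf.deriv_lt_slope hx hy hxy hfa
  rcases eq_or_ne y a with rfl | hya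
  · rw [dslope_same, dslope_of_ne f hxa, slope_comm]
    exact hf.slope_lt_deriv hx hy hxy hfa
  rw [dslope_of_ne f hxa, dslope_of_ne f hya, slope_def_field, slope_def_field]
  exact hf.secant_strict_mono ha hx hy hxa hya hxy

lemma strictMonoOn_dslope_mul_log_one :
    StrictMonoOn (dslope (fun x ↦ x * log x) 1) (Set.Ici 0) :=
  strictConvexOn_mul_log.strictMonoOn_dslope (Set.mem_Ici.mpr zero_le_one)
    (hasDerivAt_mul_log one_ne_zero).differentiableAt

lemma dslope_mul_log_one_div_log_two (τ : ℝ) :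
    dslope (fun x ↦ x * log x) 1 τ / log 2 =
      if τ = 1 then logb 2 (exp 1) else (τ / (τ - 1)) * logb 2 τ := by
  split_ifs with hτ
  · rw [hτ, dslope_same, deriv_mul_log one_ne_zero, logb, log_exp, log_one, zero_add]
  · rw [dslope_of_ne _ hτ, slope_def_field, logb]
    simp only [log_one, mul_zero, sub_zero]
    ring

/-- `f(τ) = (τ/(τ−1))·log₂ τ`, extended by `f(1) = log₂ e`, is strictly increasing on `(0,∞)`. -/
theorem strictMonoOn_tau_logb :
    StrictMonoOn
      (fun τ : ℝ => if τ = 1 then logb 2 (exp 1) else (τ / (τ - 1)) * logb 2 τ)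
      (Set.Ioi (0 : ℝ)) := by
  intro x hx y hy hxy
  simp only [← dslope_mul_log_one_div_log_two]
  have hlog2 : 0 < log 2 := log_pos one_lt_two
  gcongr
  exact strictMonoOn_dslope_mul_log_one (Set.mem_Ici_of_Ioi hx) (Set.mem_Ici_of_Ioi hy) hxy
end
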